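/- For every expression e, every set S, and every relational interpretation σ of variables as binary relations on S, the relational interpretation of e equals the union over all terms u in the term-set Trm(e) of the relational interpretations of u: σ̂(e) = ⋃_{u ∈ Trm(e)} σ̂(u). -/
import Mathlib


/-- Terms: variables, composition, intersection, converse, `1` and `⊤`. -/
inductive Trm (X : Type) : Type
  | var : X → Trm X
  | comp : Trm X → Trm X → Trm X
  | inter : Trm X → Trm X → Trm X
  | conv : Trm X → Trm X
  | one : Trm X
  | top : Trm X

/-- Relational interpretation of a term. -/
def interp {X S : Type} (σ : X → S → S → Prop) : Trm X → S → S → Prop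
  | .var a => σ a
  | .comp u v => fun i j => ∃ k, interp σ u i k ∧ interp σ v k j
  | .inter u v => fun i j => interp σ u i j ∧ interp σ v i j
  | .conv u => fun i j => interp σ u j i
  | .one => fun i j => i = j
  | .top => fun _ _ => True

/-- Expressions: terms extended with `0`, union and strict iteration. -/
inductive Expr (X : Type) : Type
  | var : X → Expr X
  | comp : Expr X → Expr X → Expr X
  | inter : Expr X → Expr X → Expr X
  | plus : Expr X → Expr X → Expr X
  | iter : Expr X → Expr X
  | conv : Expr X → Expr X
  | zero : Expr X
  | one : Expr X
  | top : Expr X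

/-- The set of terms of an expression. -/
def trms {X : Type} : Expr X → Set (Trm X)
  | .var a => {Trm.var a}
  | .comp e f => {w | ∃ u ∈ trms e, ∃ v ∈ trms f, w = Trm.comp u v}
  | .inter e f => {w | ∃ u ∈ trms e, ∃ v ∈ trms f, w = Trm.inter u v}
  | .plus e f => trms e ∪ trms f
  | .iter e => {w | ∃ u, ∃ l : List (Trm X),
      u ∈ trms e ∧ (∀ v ∈ l, v ∈ trms e) ∧ w = l.foldl Trm.comp u}
  | .conv e => {w | ∃ u ∈ trms e, w = Trm.conv u}
  | .zero => ∅
  | .one => {Trm.one}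
  | .top => {Trm.top}

/-- Relational interpretation of an expression. -/
def einterp {X S : Type} (σ : X → S → S → Prop) : Expr X → S → S → Prop
  | .var a => σ a
  | .comp e f => fun i j => ∃ k, einterp σ e i k ∧ einterp σ f k j
  | .inter e f => fun i j => einterp σ e i j ∧ einterp σ f i j
  | .plus e f => fun i j => einterp σ e i j ∨ einterp σ f i j
  | .iter e => Relation.TransGen (einterp σ e)
  | .conv e => fun i j => einterp σ e j i
  | .zero => fun _ _ => False
  | .one => fun i j => i = j
  | .top => fun _ _ => True

/-- The relational interpretation of an expression is the union of the
relational interpretations of its terms. -/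
theorem einterp_eq_iUnion_trms {X S : Type} (σ : X → S → S → Prop) (e : Expr X)
    (i j : S) :
    einterp σ e i j ↔ ∃ u ∈ trms e, interp σ u i j := by
  induction e generalizing i j with
  | var a => exact ⟨fun h => ⟨.var a, rfl, h⟩, fun ⟨u, hu, h⟩ => by cases hu; exact h⟩
  | comp e f ihe ihf =>
    constructor
    · rintro ⟨k, he, hf⟩
      obtain ⟨u, hu, hui⟩ := (ihe i k).mp he
      obtain ⟨v, hv, hvi⟩ := (ihf k j).mp hf
      exact ⟨.comp u v, ⟨u, hu, v, hv, rfl⟩, k, hui, hvi⟩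
    · rintro ⟨w, ⟨u, hu, v, hv, rfl⟩, k, hui, hvi⟩
      exact ⟨k, (ihe i k).mpr ⟨u, hu, hui⟩, (ihf k j).mpr ⟨v, hv, hvi⟩⟩
  | inter e f ihe ihf =>
    constructor
    · rintro ⟨he, hf⟩
      obtain ⟨u, hu, hui⟩ := (ihe i j).mp he
      obtain ⟨v, hv, hvi⟩ := (ihf i j).mp hf
      exact ⟨.inter u v, ⟨u, hu, v, hv, rfl⟩, hui, hvi⟩
    · rintro ⟨w, ⟨u, hu, v, hv, rfl⟩, hui, hvi⟩
      exact ⟨(ihe i j).mpr ⟨u, hu, hui⟩, (ihf i j).mpr ⟨v, hv, hvi⟩⟩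
  | plus e f ihe ihf =>
    constructor
    · rintro (he | hf)
      · obtain ⟨u, hu, hui⟩ := (ihe i j).mp he
        exact ⟨u, Or.inl hu, hui⟩
      · obtain ⟨v, hv, hvi⟩ := (ihf i j).mp hf
        exact ⟨v, Or.inr hv, hvi⟩
    · rintro ⟨u, hu | hu, hui⟩
      · exact Or.inl ((ihe i j).mpr ⟨u, hu, hui⟩)
      · exact Or.inr ((ihf i j).mpr ⟨u, hu, hui⟩)
  | iter e ihe =>
    constructor
    · intro h
      induction h with
      | single h =>
        obtain ⟨u, hu, hui⟩ := (ihe _ _).mp h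
        exact ⟨u, ⟨u, [], hu, by simp, rfl⟩, hui⟩
      | tail _ hstep ih =>
        obtain ⟨w, ⟨u, l, hu, hl, rfl⟩, hwi⟩ := ih
        obtain ⟨v, hv, hvi⟩ := (ihe _ _).mp hstep
        refine ⟨(l ++ [v]).foldl .comp u, ⟨u, l ++ [v], hu, ?_, rfl⟩, ?_⟩
        · intro x hx
          rcases List.mem_append.mp hx with h | h
          · exact hl x h
          · simp at h; subst h; exact hv
        · simp only [List.foldl_append, List.foldl_cons, List.foldl_nil]
          exact ⟨_, hwi, hvi⟩
    · rintro ⟨w, ⟨u, l, hu, hl, rfl⟩, hwi⟩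
      induction l using List.reverseRecOn generalizing j with
      | nil => exact Relation.TransGen.single ((ihe i j).mpr ⟨u, hu, hwi⟩)
      | append_singleton l v ih =>
        simp only [List.foldl_append, List.foldl_cons, List.foldl_nil] at hwi
        obtain ⟨k, h1, h2⟩ := hwi
        refine Relation.TransGen.tail (ih k (fun x hx => hl x (List.mem_append.mpr (Or.inl hx))) h1) ?_
        exact (ihe k j).mpr ⟨v, hl v (by simp), h2⟩
  | conv e ihe =>
    constructor
    · intro h
      obtain ⟨u, hu, hui⟩ := (ihe j i).mp h
      exact ⟨.conv u, ⟨u, hu, rfl⟩, hui⟩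
    · rintro ⟨w, ⟨u, hu, rfl⟩, hui⟩
      exact (ihe j i).mpr ⟨u, hu, hui⟩
  | zero => exact ⟨fun h => h.elim, fun ⟨u, hu, _⟩ => hu.elim⟩
  | one => exact ⟨fun h => ⟨.one, rfl, h⟩, fun ⟨u, hu, h⟩ => by cases hu; exact h⟩
  | top => exact ⟨fun _ => ⟨.top, rfl, trivial⟩, fun _ => trivial⟩
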